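/- arXiv:2408.06824 — 2 statements merged into one kernel-verified Lean document; each statement's English description precedes it below -/
import Mathlib

section
/- For p ≥ 1 and s ≥ 0, the supremum over t ≥ 0 of st − Φ_p(t) is attained at t = exp(s^{1/p}) − 1, and the Legendre transform equals Φ_p*(s) = p ∫₀^{exp(s^{1/p})−1} (log(1+x))^{p−1} dx − s. -/
open MeasureTheory

noncomputable def Phi (p t : ℝ) : ℝ :=
  (1 + t) * (Real.log (1 + t)) ^ p - p * ∫ x in (0:ℝ)..t, (Real.log (1 + x)) ^ (p - 1)

/-!
`Φ_p` is differentiable on `(-1, ∞)` with `Φ_p'(t) = (log (1 + t)) ^ p`: the term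
`p (log (1 + t)) ^ (p - 1)` coming from the product rule is cancelled by the derivative of the
integral. On `[0, ∞)` this derivative is monotone, so `Φ_p` is convex there, and `s t - Φ_p t` is
maximised where `Φ_p'(t) = s`, i.e. at `T = exp (s ^ (1 / p)) - 1`. At that point
`(1 + T) (log (1 + T)) ^ p = s (1 + T)`, which gives the value.
-/

open Real Set

theorem ConvexOn.add_mul_sub_le_of_hasDerivAt {S : Set ℝ} {f : ℝ → ℝ} {f' x y : ℝ}
    (hf : ConvexOn ℝ S f) (hx : x ∈ S) (hy : y ∈ S) (hf' : HasDerivAt f f' x) :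
    f x + f' * (y - x) ≤ f y := by
  rcases lt_trichotomy x y with hxy | rfl | hyx
  · have := hf.le_slope_of_hasDerivAt hx hy hxy hf'
    rw [slope_def_field, le_div_iff₀ (sub_pos.2 hxy)] at this
    linarith
  · simp
  · have := hf.slope_le_of_hasDerivAt hy hx hyx hf'
    rw [slope_def_field, div_le_iff₀ (sub_pos.2 hyx)] at this
    linarith

theorem continuousAt_log_one_add_rpow {q x : ℝ} (hq : 0 ≤ q) (hx : -1 < x) :
    ContinuousAt (fun y => log (1 + y) ^ q) x :=
  ((continuousAt_log (by linarith)).comp (by fun_prop)).rpow_const (Or.inr hq)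

theorem hasDerivAt_integral_log_one_add_rpow {q a : ℝ} (hq : 0 ≤ q) (ha : -1 < a) :
    HasDerivAt (fun t => ∫ x in (0:ℝ)..t, log (1 + x) ^ q) (log (1 + a) ^ q) a := by
  have hcont : ∀ x ∈ Ioi (-1 : ℝ), ContinuousAt (fun y => log (1 + y) ^ q) x :=
    fun x hx => continuousAt_log_one_add_rpow hq hx
  refine intervalIntegral.integral_hasDerivAt_right ?_
    (ContinuousAt.stronglyMeasurableAtFilter isOpen_Ioi hcont a ha) (hcont a ha)
  refine ContinuousOn.intervalIntegrable fun x hx => (hcont x ?_).continuousWithinAt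
  rcases mem_uIcc.1 hx with h | h <;> simp only [mem_Ioi] <;> linarith [h.1]

theorem hasDerivAt_Phi {p a : ℝ} (hp : 1 ≤ p) (ha : -1 < a) :
    HasDerivAt (Phi p) (log (1 + a) ^ p) a := by
  have hne : 1 + a ≠ 0 := by linarith
  have hlin : HasDerivAt (fun t : ℝ => 1 + t) 1 a := (hasDerivAt_id a).const_add 1
  have hpow : HasDerivAt (fun t => log (1 + t) ^ p)
      (1 / (1 + a) * p * log (1 + a) ^ (p - 1)) a :=
    (hlin.log hne).rpow_const (Or.inr hp)
  have hint := (hasDerivAt_integral_log_one_add_rpow (sub_nonneg.2 hp) ha).const_mul p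
  have hcancel : 1 * log (1 + a) ^ p + (1 + a) * (1 / (1 + a) * p * log (1 + a) ^ (p - 1))
      - p * log (1 + a) ^ (p - 1) = log (1 + a) ^ p := by
    field_simp
    ring
  rw [← hcancel]
  exact (hlin.mul hpow).sub hint

theorem convexOn_Phi {p : ℝ} (hp : 1 ≤ p) : ConvexOn ℝ (Ici 0) (Phi p) := by
  have hderiv : ∀ a ∈ Ici (0 : ℝ), HasDerivAt (Phi p) (log (1 + a) ^ p) a :=
    fun a ha => hasDerivAt_Phi hp (by linarith [mem_Ici.1 ha])
  refine MonotoneOn.convexOn_of_deriv (convex_Ici 0)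
    (fun a ha => (hderiv a ha).continuousAt.continuousWithinAt)
    (fun a ha => (hderiv a (interior_subset ha)).differentiableAt.differentiableWithinAt) ?_
  intro a ha b hb hab
  rw [interior_Ici] at ha hb
  rw [(hderiv a (mem_Ici_of_Ioi ha)).deriv, (hderiv b (mem_Ici_of_Ioi hb)).deriv]
  have ha' : 0 ≤ log (1 + a) := log_nonneg (by linarith [mem_Ioi.1 ha])
  exact rpow_le_rpow ha' (log_le_log (by linarith [mem_Ioi.1 ha]) (by linarith)) (by linarith)

theorem Phi_legendre_transform (p s : ℝ) (hp : 1 ≤ p) (hs : 0 ≤ s)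
    (T : ℝ) (hT : T = Real.exp (s ^ (1 / p)) - 1) :
    s * T - Phi p T = p * (∫ x in (0:ℝ)..T, (Real.log (1 + x)) ^ (p - 1)) - s ∧
      IsGreatest ((fun t => s * t - Phi p t) '' Set.Ici 0)
        (p * (∫ x in (0:ℝ)..T, (Real.log (1 + x)) ^ (p - 1)) - s) := by
  have hT0 : 0 ≤ T := by
    rw [hT, sub_nonneg]
    exact one_le_exp (rpow_nonneg hs _)
  have hderivT : log (1 + T) ^ p = s := by
    rw [hT, add_sub_cancel, log_exp, ← rpow_mul hs, one_div_mul_cancel (by linarith),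
      rpow_one]
  have hvalue : s * T - Phi p T = p * (∫ x in (0:ℝ)..T, log (1 + x) ^ (p - 1)) - s := by
    rw [Phi, hderivT]
    ring
  refine ⟨hvalue, ⟨T, hT0, hvalue⟩, ?_⟩
  rintro _ ⟨t, ht, rfl⟩
  have htangent := (convexOn_Phi hp).add_mul_sub_le_of_hasDerivAt hT0 ht
    (hasDerivAt_Phi hp (by linarith))
  rw [hderivT] at htangent
  linarith
end

section
/- For p ≥ 1 and all s ≥ 0, the Legendre transform satisfies Φ_p*(s) ≤ (exp(s^{1/p}) − 1)·s ≤ exp(c_p s^{1/p}), where c_p = p/e + 1. -/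
open MeasureTheory

noncomputable def PhiStar (p s : ℝ) : ℝ :=
  sSup ((fun t => s * t - Phi p t) '' Set.Ici 0)

/-! Since `(1 + t) log (1 + t) ^ p` has derivative `log (1 + t) ^ p + p log (1 + t) ^ (p - 1)`,
`Phi p t = ∫₀ᵗ log (1 + x) ^ p dx`, so the concave function
`t ↦ s t - Phi p t` is maximised where `log (1 + t) ^ p = s`, i.e. at `T = exp (s ^ (1/p)) - 1`.
For `t ≤ T` one bounds `Phi p t ≥ 0`, and for `t ≥ T` the integrand exceeds `s` on `[T, t]`;
either way `s t - Phi p t ≤ s T`. The second inequality is `u ≤ exp (u / e)` raised to the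
power `p`, with `u = s ^ (1/p)`. -/

open Real Set

lemma monotoneOn_log_one_add_rpow {p : ℝ} (hp : 0 ≤ p) :
    MonotoneOn (fun x => log (1 + x) ^ p) (Ici 0) := by
  intro x (hx : 0 ≤ x) y _ hxy
  exact rpow_le_rpow (log_nonneg (by linarith)) (log_le_log (by linarith) (by linarith)) hp

lemma intervalIntegrable_log_one_add_rpow {p a b : ℝ} (hp : 0 ≤ p) (ha : 0 ≤ a)
    (hb : 0 ≤ b) :
    IntervalIntegrable (fun x => log (1 + x) ^ p) volume a b :=
  ((monotoneOn_log_one_add_rpow hp).mono fun _ hx =>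
    le_trans (le_inf ha hb) hx.1).intervalIntegrable

lemma hasDerivAt_one_add_mul_log_one_add_rpow {p x : ℝ} (hp : 1 ≤ p) (hx : 0 < 1 + x) :
    HasDerivAt (fun y => (1 + y) * log (1 + y) ^ p)
      (log (1 + x) ^ p + p * log (1 + x) ^ (p - 1)) x := by
  have h_one_add : HasDerivAt (fun y : ℝ => 1 + y) 1 x := (hasDerivAt_id x).const_add 1
  have h_log := (hasDerivAt_log hx.ne').comp x h_one_add
  have h_rpow := (hasDerivAt_rpow_const (x := log (1 + x)) (Or.inr hp)).comp x h_log
  exact (h_one_add.mul h_rpow).congr_deriv (by field_simp; simp only [Function.comp_apply])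

lemma Phi_eq_integral {p t : ℝ} (hp : 1 ≤ p) (ht : 0 ≤ t) :
    Phi p t = ∫ x in (0 : ℝ)..t, log (1 + x) ^ p := by
  have hp0 : 0 < p := by linarith
  have hint := intervalIntegrable_log_one_add_rpow hp0.le le_rfl ht
  have hint' :=
    (intervalIntegrable_log_one_add_rpow (p := p - 1) (by linarith) le_rfl ht).const_mul p
  have hFTC := intervalIntegral.integral_eq_sub_of_hasDerivAt
    (fun x hx => hasDerivAt_one_add_mul_log_one_add_rpow hp
      (by linarith [(uIcc_of_le ht ▸ hx : x ∈ Icc 0 t).1]))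
    (hint.add hint')
  rw [intervalIntegral.integral_add hint hint', intervalIntegral.integral_const_mul] at hFTC
  simp only [add_zero, log_one, zero_rpow hp0.ne', mul_zero, sub_zero] at hFTC
  rw [Phi]
  linarith

lemma Phi_nonneg {p t : ℝ} (hp : 1 ≤ p) (ht : 0 ≤ t) : 0 ≤ Phi p t := by
  rw [Phi_eq_integral hp ht]
  exact intervalIntegral.integral_nonneg ht fun x hx =>
    rpow_nonneg (log_nonneg (by linarith [hx.1])) p

lemma mul_sub_le_Phi {p s t T : ℝ} (hp : 1 ≤ p) (hs : 0 ≤ s) (ht : 0 ≤ t) (hT : 0 ≤ T)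
    (hsT : s ≤ log (1 + T) ^ p) : s * (t - T) ≤ Phi p t := by
  rcases le_total t T with htT | hTt
  · nlinarith [Phi_nonneg hp ht]
  have hp0 : 0 ≤ p := by linarith
  have hint := intervalIntegrable_log_one_add_rpow hp0 hT ht
  have hsplit : Phi p t = Phi p T + ∫ x in T..t, log (1 + x) ^ p := by
    rw [Phi_eq_integral hp ht, Phi_eq_integral hp hT,
      intervalIntegral.integral_add_adjacent_intervals
        (intervalIntegrable_log_one_add_rpow hp0 le_rfl hT) hint]
  have hlower : ∫ x in T..t, s ≤ ∫ x in T..t, log (1 + x) ^ p :=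
    intervalIntegral.integral_mono_on hTt intervalIntegrable_const hint fun x hx =>
      hsT.trans (monotoneOn_log_one_add_rpow hp0 hT (hT.trans hx.1) hx.1)
  rw [intervalIntegral.integral_const, smul_eq_mul] at hlower
  linarith [Phi_nonneg hp hT]

lemma PhiStar_le_mul {p s T : ℝ} (hp : 1 ≤ p) (hs : 0 ≤ s) (hT : 0 ≤ T)
    (hsT : s ≤ log (1 + T) ^ p) : PhiStar p s ≤ s * T := by
  refine Real.sSup_le ?_ (mul_nonneg hs hT)
  rintro _ ⟨t, ht, rfl⟩
  linarith [mul_sub_le_Phi hp hs ht hT hsT]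

lemma le_exp_div_exp_one (x : ℝ) : x ≤ exp (x / exp 1) := by
  simpa [mul_div_cancel₀ x (exp_pos 1).ne'] using exp_one_mul_le_exp (x := x / exp 1)

lemma rpow_le_exp_div_exp_one_mul {x p : ℝ} (hx : 0 ≤ x) (hp : 0 ≤ p) :
    x ^ p ≤ exp (p / exp 1 * x) :=
  calc x ^ p ≤ exp (x / exp 1) ^ p := rpow_le_rpow hx (le_exp_div_exp_one x) hp
    _ = exp (p / exp 1 * x) := by rw [← exp_mul]; ring_nf

theorem PhiStar_bound (p s : ℝ) (hp : 1 ≤ p) (hs : 0 ≤ s) :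
    PhiStar p s ≤ (Real.exp (s ^ (1 / p)) - 1) * s ∧
      (Real.exp (s ^ (1 / p)) - 1) * s ≤
        Real.exp ((p / Real.exp 1 + 1) * s ^ (1 / p)) := by
  set u := s ^ (1 / p)
  have hu : 0 ≤ u := rpow_nonneg hs _
  have hup : u ^ p = s := by
    rw [← rpow_mul hs, one_div_mul_cancel (by linarith), rpow_one]
  have hexp : 1 ≤ exp u := one_le_exp hu
  constructor
  · rw [mul_comm]
    refine PhiStar_le_mul hp hs (by linarith) ?_
    rw [add_sub_cancel, log_exp, hup]
  · calc (exp u - 1) * s ≤ exp u * exp (p / exp 1 * u) := by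
          gcongr
          · linarith
          · exact hup ▸ rpow_le_exp_div_exp_one_mul hu (by linarith)
      _ = exp ((p / exp 1 + 1) * u) := by rw [← exp_add]; ring_nf
end
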